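/- If (m−1)·E(Y_0 · m^{Y_0}) = E(m^{Y_0}) < ∞ (critical system), then for every n ≥ 0 the same identity holds at generation n: (m−1)·E(Y_n · m^{Y_n}) = E(m^{Y_n}) < ∞. -/

import Mathlib

/-!
Write `G(x) = E x^Y` and `H(x) = E Y x^Y = x G'(x)`, evaluated at `x = m`; criticality reads
`(m - 1) H = G`. For the sum `S` of `m` i.i.d. copies, `G_S = G^m` and, by Leibniz,
`H_S = m G^(m-1) H`, so criticality gives `(m - 1) H_S = m G_S`. Removing one unit from `S`
divides the generating functions by `x` up to the atom `P(S = 0)`: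
for the next generation, `m G₁ + P(S = 0) = m P(S = 0) + G_S` and `m H₁ + G_S = H_S + P(S = 0)`.
Eliminating `G_S`, `H_S` and `P(S = 0)` from these three relations leaves `(m - 1) H₁ = G₁`.
-/

open scoped ENNReal

/-- Law of the sum of `n` i.i.d. copies of a `PMF ℕ`. -/
noncomputable def sumIID (p : PMF ℕ) : ℕ → PMF ℕ
  | 0 => PMF.pure 0
  | (k+1) => (sumIID p k).bind (fun s => p.map (fun a => a + s))

/-- One step of the Derrida–Retaux recursion: `Y' = (Y_1 + ⋯ + Y_m − 1)⁺`. -/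
noncomputable def step (m : ℕ) (p : PMF ℕ) : PMF ℕ :=
  (sumIID p m).map (fun s => s - 1)

namespace PMF

variable {α β : Type*}

lemma tsum_pure_mul (a : α) (g : α → ℝ≥0∞) : ∑' b, pure a b * g b = g a := by
  rw [tsum_eq_single a fun b hb => by simp [pure_apply, hb]]
  simp

lemma tsum_bind_mul (p : PMF α) (f : α → PMF β) (g : β → ℝ≥0∞) :
    ∑' b, p.bind f b * g b = ∑' a, p a * ∑' b, f a b * g b := by
  simp_rw [bind_apply, ← ENNReal.tsum_mul_right, ← ENNReal.tsum_mul_left, mul_assoc]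
  exact ENNReal.tsum_comm

lemma tsum_map_mul (p : PMF α) (f : α → β) (g : β → ℝ≥0∞) :
    ∑' b, p.map f b * g b = ∑' a, p a * g (f a) := by
  simp_rw [map, tsum_bind_mul, Function.comp_apply, tsum_pure_mul]

lemma tsum_map_pred_mul (p : PMF ℕ) (g : ℕ → ℝ≥0∞) :
    ∑' n, p.map (· - 1) n * g n = p 0 * g 0 + ∑' n, p (n + 1) * g n := by
  rw [tsum_map_mul, tsum_eq_zero_add' ENNReal.summable]
  simp

end PMF

lemma tsum_sumIID_succ_mul (p : PMF ℕ) (k : ℕ) (g : ℕ → ℝ≥0∞) :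
    ∑' n, sumIID p (k + 1) n * g n = ∑' s, sumIID p k s * ∑' a, p a * g (a + s) := by
  simp_rw [sumIID, PMF.tsum_bind_mul, PMF.tsum_map_mul]

noncomputable def pgf (p : PMF ℕ) (x : ℝ≥0∞) : ℝ≥0∞ :=
  ∑' k, p k * x ^ k

/-- `x ↦ E Y x^Y = x G'(x)`, where `G` is the probability generating function. -/
noncomputable def pgfEuler (p : PMF ℕ) (x : ℝ≥0∞) : ℝ≥0∞ :=
  ∑' k, p k * ((k : ℝ≥0∞) * x ^ k)

section SumIID

variable (p : PMF ℕ) (x : ℝ≥0∞)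

lemma pgf_sumIID (k : ℕ) : pgf (sumIID p k) x = pgf p x ^ k := by
  induction k with
  | zero => simp [pgf, sumIID]
  | succ k ih =>
    have hinner : ∀ s, ∑' a, p a * x ^ (a + s) = pgf p x * x ^ s := fun s => by
      simp_rw [pgf, ← ENNReal.tsum_mul_right, pow_add, mul_assoc]
    rw [pgf, tsum_sumIID_succ_mul]
    simp_rw [hinner, mul_left_comm _ (pgf p x), ENNReal.tsum_mul_left]
    rw [← pgf, ih, pow_succ']

lemma pgfEuler_sumIID_succ (k : ℕ) :
    pgfEuler (sumIID p (k + 1)) x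
      = pgfEuler p x * pgf p x ^ k + pgf p x * pgfEuler (sumIID p k) x := by
  have hinner : ∀ s, ∑' a, p a * (((a + s : ℕ) : ℝ≥0∞) * x ^ (a + s))
      = pgfEuler p x * x ^ s + pgf p x * ((s : ℝ≥0∞) * x ^ s) := fun s => by
    simp_rw [pgfEuler, pgf, ← ENNReal.tsum_mul_right, ← ENNReal.tsum_add]
    exact tsum_congr fun a => by push_cast; ring
  rw [pgfEuler, tsum_sumIID_succ_mul]
  simp_rw [hinner, mul_add, ENNReal.tsum_add,
    mul_left_comm _ (pgfEuler p x), mul_left_comm _ (pgf p x), ENNReal.tsum_mul_left]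
  rw [← pgf, pgf_sumIID, ← pgfEuler]

lemma pgfEuler_sumIID (k : ℕ) :
    pgfEuler (sumIID p k) x = k * pgf p x ^ (k - 1) * pgfEuler p x := by
  induction k with
  | zero => simp [pgfEuler, sumIID]
  | succ k ih =>
    rw [pgfEuler_sumIID_succ, ih]
    rcases k with _ | k
    · simp
    · push_cast
      ring

end SumIID

section Pred

variable (p : PMF ℕ) (x : ℝ≥0∞)

lemma pgf_eq_add_mul : pgf p x = p 0 + x * ∑' n, p (n + 1) * x ^ n := by
  rw [pgf, tsum_eq_zero_add' ENNReal.summable, ← ENNReal.tsum_mul_left]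
  simp_rw [pow_succ']
  simp [mul_left_comm x]

lemma pgfEuler_eq_mul_add :
    pgfEuler p x = x * (∑' n, p (n + 1) * ((n : ℝ≥0∞) * x ^ n) + ∑' n, p (n + 1) * x ^ n) := by
  rw [pgfEuler, tsum_eq_zero_add' ENNReal.summable, ← ENNReal.tsum_add, ← ENNReal.tsum_mul_left]
  simp only [Nat.cast_zero, zero_mul, mul_zero, zero_add]
  exact tsum_congr fun n => by push_cast; ring

lemma pgf_map_pred : x * pgf (p.map (· - 1)) x + p 0 = x * p 0 + pgf p x := by
  rw [pgf, PMF.tsum_map_pred_mul, pgf_eq_add_mul]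
  simp only [pow_zero, mul_one]
  ring

lemma pgfEuler_map_pred : x * pgfEuler (p.map (· - 1)) x + pgf p x = pgfEuler p x + p 0 := by
  rw [pgfEuler, PMF.tsum_map_pred_mul, pgf_eq_add_mul, pgfEuler_eq_mul_add]
  simp only [Nat.cast_zero, zero_mul, mul_zero, zero_add]
  ring

end Pred

/-- The final elimination, with `n + 1 = m`, `s = P(S = 0)`, `A = G_S`, `B = H_S`; it cancels
the finite `n A + s` and the factor `m` instead of subtracting. -/
lemma ENNReal.mul_eq_of_critical_relations {n s A B G₁ H₁ : ℝ≥0∞} (hn : n ≠ ∞) (hs : s ≠ ∞)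
    (hA : A ≠ ∞) (hG₁ : (n + 1) * G₁ + s = (n + 1) * s + A) (hH₁ : (n + 1) * H₁ + A = B + s)
    (hB : n * B = (n + 1) * A) : n * H₁ = G₁ := by
  have hcancel : n * A + s ≠ ∞ := by finiteness
  refine (ENNReal.mul_right_inj (a := n + 1) (by simp) (by finiteness)).mp
    ((ENNReal.add_left_inj hcancel).mp ?_)
  calc (n + 1) * (n * H₁) + (n * A + s) = n * ((n + 1) * H₁ + A) + s := by ring
    _ = n * B + (n + 1) * s := by rw [hH₁]; ring
    _ = ((n + 1) * G₁ + s) + n * A := by rw [hB, hG₁]; ring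
    _ = (n + 1) * G₁ + (n * A + s) := by ring

def IsCritical (m : ℕ) (p : PMF ℕ) : Prop :=
  ((m : ℝ≥0∞) - 1) * pgfEuler p m = pgf p m ∧ pgf p m < ∞

theorem isCritical_step {m : ℕ} (hm : 1 ≤ m) {p : PMF ℕ} (hp : IsCritical m p) :
    IsCritical m (step m p) := by
  obtain ⟨hcrit, hfin⟩ := hp
  set n : ℝ≥0∞ := ((m - 1 : ℕ) : ℝ≥0∞)
  have hmn : (m : ℝ≥0∞) = n + 1 := by simp only [n]; norm_cast; omega
  have hm1 : (m : ℝ≥0∞) - 1 = n := by simp [n, ENNReal.natCast_sub]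
  set S := sumIID p m
  have hGS : pgf S m = pgf p m ^ m := pgf_sumIID p m m
  have hGSfin : pgf S m ≠ ∞ := by rw [hGS]; finiteness
  have hS0 : S 0 ≠ ∞ := (S.apply_lt_top 0).ne
  have hHS : n * pgfEuler S m = m * pgf S m := by
    rw [pgfEuler_sumIID, hGS, ← hm1, mul_left_comm, hcrit, mul_assoc, pow_sub_one_mul (by omega)]
  have hG₁ : (m : ℝ≥0∞) * pgf (step m p) m + S 0 = m * S 0 + pgf S m := pgf_map_pred S m
  have hH₁ : (m : ℝ≥0∞) * pgfEuler (step m p) m + pgf S m = pgfEuler S m + S 0 :=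
    pgfEuler_map_pred S m
  refine ⟨?_, ?_⟩
  · rw [hmn] at hG₁ hH₁ hHS hGSfin
    rw [hm1, hmn]
    exact ENNReal.mul_eq_of_critical_relations (by simp [n]) hS0 hGSfin hG₁ hH₁ hHS
  · calc pgf (step m p) m ≤ m * pgf (step m p) m + S 0 :=
          le_add_right (le_mul_of_one_le_left' (by exact_mod_cast hm))
      _ = m * S 0 + pgf S m := hG₁
      _ < ∞ := by finiteness

theorem stmt4 (m : ℕ) (hm : 2 ≤ m) (Y : ℕ → PMF ℕ)
    (hY : ∀ n, Y (n+1) = step m (Y n))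
    (hcrit : ((m : ℝ≥0∞) - 1) * (∑' k, Y 0 k * ((k : ℝ≥0∞) * (m : ℝ≥0∞) ^ k))
        = ∑' k, Y 0 k * (m : ℝ≥0∞) ^ k)
    (hfin : (∑' k, Y 0 k * (m : ℝ≥0∞) ^ k) < ∞) :
    ∀ n, ((m : ℝ≥0∞) - 1) * (∑' k, Y n k * ((k : ℝ≥0∞) * (m : ℝ≥0∞) ^ k))
        = (∑' k, Y n k * (m : ℝ≥0∞) ^ k)
      ∧ (∑' k, Y n k * (m : ℝ≥0∞) ^ k) < ∞ := by
  intro n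
  induction n with
  | zero => exact ⟨hcrit, hfin⟩
  | succ n ih =>
    rw [hY n]
    exact isCritical_step (by omega) ih
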